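/- arXiv:0801.2082 — 6 statements merged into one kernel-verified Lean document; each statement's English description precedes it below -/
import Mathlib

section
/- For any complex number ω with |ω| = 1 and ω ≠ 1, the partial sums satisfy ∑_{n=1}^{N} ω^n/n = -log(1-ω) + O(1/N); precisely, there is a constant C such that |∑_{n=1}^{N} ω^n/n + log(1-ω)| ≤ C/N for all N ≥ 1. -/
/-!
Write `ω ^ n / n = (1 / n) • ω ^ n`. The partial sums of `ω ^ n` are bounded by `2 / ‖ω - 1‖`, so
Abel summation against the decreasing weights `1 / n` (Dirichlet's test) shows that the series
converges and that its tail after `N` terms is at most twice that bound times `1 / (N + 1)`.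
Abel's limit theorem identifies the sum with the radial limit of `∑ (ω x) ^ n / n = -log (1 - ω x)`
as `x → 1⁻`, which is `-log (1 - ω)` because `1 - ω` lies in the slit plane.
-/

open Finset Filter Topology

section Dirichlet

variable {E : Type*} [NormedAddCommGroup E] [NormedSpace ℝ E] {f : ℕ → ℝ} {a : ℕ → E} {B : ℝ}

theorem Antitone.norm_sum_Ico_smul_le (hf : Antitone f) (hf0 : ∀ i, 0 ≤ f i)
    (hB : ∀ n, ‖∑ i ∈ range n, a i‖ ≤ B) {m n : ℕ} (hmn : m ≤ n) :
    ‖∑ i ∈ Ico m n, f i • a i‖ ≤ 2 * B * f m := by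
  rcases hmn.eq_or_lt with rfl | hmn
  · simpa using mul_nonneg (mul_nonneg zero_le_two ((norm_nonneg _).trans (hB 0))) (hf0 m)
  have hstep : ∀ i, ‖(f (i + 1) - f i) • ∑ j ∈ range (i + 1), a j‖ ≤ (f i - f (i + 1)) * B := by
    intro i
    have hi : 0 ≤ f i - f (i + 1) := sub_nonneg.2 (hf i.le_succ)
    rw [norm_smul, Real.norm_eq_abs, abs_sub_comm, abs_of_nonneg hi]
    exact mul_le_mul_of_nonneg_left (hB _) hi
  have hend : ∀ k j, ‖f k • ∑ i ∈ range j, a i‖ ≤ f k * B := fun k j => by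
    rw [norm_smul, Real.norm_of_nonneg (hf0 k)]
    exact mul_le_mul_of_nonneg_left (hB j) (hf0 k)
  have htel : ∑ i ∈ Ico m (n - 1), (f i - f (i + 1)) = f m - f (n - 1) := by
    rw [← neg_sub, ← sum_Ico_sub f (Nat.le_sub_one_of_lt hmn), ← sum_neg_distrib]
    simp only [neg_sub]
  rw [sum_Ico_by_parts f a hmn]
  calc _ ≤ f (n - 1) * B + f m * B + ∑ i ∈ Ico m (n - 1), (f i - f (i + 1)) * B :=
        (norm_sub_le _ _).trans <|
          add_le_add ((norm_sub_le _ _).trans (add_le_add (hend _ _) (hend _ _)))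
            ((norm_sum_le _ _).trans (sum_le_sum fun i _ => hstep i))
    _ = 2 * B * f m := by rw [← sum_mul, htel]; ring

theorem Antitone.exists_tendsto_series_smul_and_norm_sub_le [CompleteSpace E] (hf : Antitone f)
    (hf0 : Tendsto f atTop (𝓝 0)) (hB : ∀ n, ‖∑ i ∈ range n, a i‖ ≤ B) :
    ∃ l, Tendsto (fun n ↦ ∑ i ∈ range n, f i • a i) atTop (𝓝 l) ∧
      ∀ m, ‖l - ∑ i ∈ range m, f i • a i‖ ≤ 2 * B * f m := by
  obtain ⟨l, hl⟩ :=
    cauchySeq_tendsto_of_complete (hf.cauchySeq_series_mul_of_tendsto_zero_of_bounded hf0 hB)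
  refine ⟨l, hl, fun m =>
    _root_.le_of_tendsto (hl.sub_const _).norm (eventually_atTop.2 ⟨m, fun n hmn => ?_⟩)⟩
  rw [← sum_Ico_eq_sub _ hmn]
  exact hf.norm_sum_Ico_smul_le (fun i => hf.le_of_tendsto hf0 i) hB hmn

end Dirichlet

theorem norm_geom_sum_le_of_norm_le_one {K : Type*} [NormedDivisionRing K] {x : K}
    (hx : ‖x‖ ≤ 1) (hx1 : x ≠ 1) (n : ℕ) : ‖∑ i ∈ range n, x ^ i‖ ≤ 2 / ‖x - 1‖ := by
  rw [geom_sum_eq hx1, norm_div]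
  gcongr
  calc ‖x ^ n - 1‖ ≤ ‖x ^ n‖ + ‖(1 : K)‖ := norm_sub_le _ _
    _ ≤ 1 + 1 := add_le_add (by rw [norm_pow]; exact pow_le_one₀ (norm_nonneg _) hx) norm_one.le
    _ = 2 := one_add_one_eq_two

namespace Complex

theorem one_sub_mem_slitPlane_of_norm_le_one {z : ℂ} (hz : ‖z‖ ≤ 1) (hz1 : z ≠ 1) :
    1 - z ∈ slitPlane := by
  rw [mem_slitPlane_iff]
  by_contra! h
  simp only [sub_re, one_re, sub_im, one_im, zero_sub, neg_eq_zero] at h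
  have hre : z.re = 1 := le_antisymm ((re_le_norm z).trans hz) (by linarith [h.1])
  exact hz1 (ext hre h.2)

theorem eq_neg_log_one_sub_of_tendsto {z l : ℂ} (hz : ‖z‖ ≤ 1) (hz1 : z ≠ 1)
    (h : Tendsto (fun n ↦ ∑ i ∈ range n, z ^ i / i) atTop (𝓝 l)) : l = -log (1 - z) := by
  have habel := tendsto_map'_iff.1 (tendsto_tsum_powerSeries_nhdsWithin_lt h)
  have hlog : ContinuousAt (fun w : ℂ ↦ -log (1 - z * w)) 1 :=
    ((continuousAt_const.sub (continuousAt_const.mul continuousAt_id)).clog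
      (by simpa using one_sub_mem_slitPlane_of_norm_le_one hz hz1)).neg
  have hlog' : Tendsto (fun x : ℝ ↦ -log (1 - z * x)) (𝓝[<] 1) (𝓝 (-log (1 - z))) := by
    simpa only [mul_one, Function.comp_def] using hlog.tendsto.comp
      (continuous_ofReal.tendsto' 1 1 ofReal_one |>.mono_left
        (nhdsWithin_le_nhds (s := Set.Iio 1)))
  have heq : ∀ᶠ x : ℝ in 𝓝[<] 1, ∑' n : ℕ, z ^ n / n * (x : ℂ) ^ n = -log (1 - z * x) := by
    filter_upwards [self_mem_nhdsWithin, eventually_nhdsWithin_of_eventually_nhds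
      (eventually_gt_nhds (show (-1 : ℝ) < 1 by norm_num))] with x hx1 hx2
    have hzx : ‖z * x‖ < 1 := by
      rw [norm_mul, norm_real, Real.norm_eq_abs]
      exact (mul_le_of_le_one_left (abs_nonneg _) hz).trans_lt (abs_lt.2 ⟨hx2, hx1⟩)
    rw [← (hasSum_taylorSeries_neg_log hzx).tsum_eq]
    exact tsum_congr fun n => by rw [mul_pow]; ring
  exact tendsto_nhds_unique (habel.congr' heq) hlog'

end Complex

theorem stmt_3 (ω : ℂ) (hω : ‖ω‖ = 1) (hω1 : ω ≠ 1) :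
    ∃ C : ℝ, ∀ N : ℕ, 1 ≤ N →
      ‖(∑ n ∈ Finset.Icc 1 N, ω ^ n / (n : ℂ)) + Complex.log (1 - ω)‖
        ≤ C / N := by
  set B := 2 / ‖ω - 1‖
  have hpow : ∀ n, ‖∑ i ∈ range n, ω ^ (i + 1)‖ ≤ B := fun n => by
    simpa [pow_succ', ← mul_sum, hω] using norm_geom_sum_le_of_norm_le_one hω.le hω1 n
  have hf : Antitone fun i : ℕ => 1 / ((i : ℝ) + 1) := fun i j hij => by dsimp only; gcongr
  obtain ⟨l, hl, hrate⟩ :=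
    hf.exists_tendsto_series_smul_and_norm_sub_le tendsto_one_div_add_atTop_nhds_zero_nat hpow
  -- the `n = 0` term below is `ω ^ 0 / 0 = 0`
  have hsum : ∀ N, ∑ i ∈ range N, (1 / ((i : ℝ) + 1)) • ω ^ (i + 1) =
      ∑ n ∈ range (N + 1), ω ^ n / n := fun N => by
    rw [sum_range_succ']
    simp [div_eq_inv_mul]
  have hIcc : ∀ N : ℕ, ∑ n ∈ Icc 1 N, ω ^ n / n = ∑ n ∈ range (N + 1), ω ^ n / n := fun N => by
    rw [range_eq_Ico, sum_eq_sum_Ico_succ_bot N.succ_pos]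
    simp [Ico_add_one_right_eq_Icc]
  have hl' : l = -Complex.log (1 - ω) := by
    refine Complex.eq_neg_log_one_sub_of_tendsto hω.le hω1 ((tendsto_add_atTop_iff_nat 1).1 ?_)
    simpa only [hsum] using hl
  refine ⟨2 * B, fun N hN => ?_⟩
  have hN : (0 : ℝ) < N := by exact_mod_cast hN
  calc _ = ‖l - ∑ i ∈ range N, (1 / ((i : ℝ) + 1)) • ω ^ (i + 1)‖ := by
        rw [hl', hsum, ← hIcc, ← norm_neg]; ring_nf
    _ ≤ 2 * B * (1 / (N + 1)) := hrate N
    _ ≤ 2 * B / N := by rw [mul_one_div]; gcongr; linarith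
end

section
/- Let λ₁,…,λ_d be complex numbers with |λᵢ| > 1 for 1 ≤ i ≤ s, |λᵢ| = 1 for s+1 ≤ i ≤ s+2t, and |λᵢ| < 1 for i > s+2t, and set Λ = ∏_{i=1}^s λᵢ, κ = min(|λ_s|, |λ_{s+2t+1}|^{-1}) > 1 (interpreting appropriately if a range is empty). Then |∏_{i=1}^d (λᵢⁿ - 1) - (-1)^{d-s} Λⁿ ∏_{i=s+1}^{s+2t} (λᵢⁿ - 1)| / |Λ|ⁿ = O(κ^{-n}), i.e., there is a constant C with the left-hand side at most C·κ^{-n} for all n ≥ 1. -/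
/-!
Factor each `λᵢⁿ - 1` as a dominant part times `1 + eᵢ`: the dominant part is `λᵢⁿ` for the
expanding indices, `λᵢⁿ - 1` itself for the unimodular ones and `-1` for the contracting ones.
The dominant parts multiply to exactly `(-1)^(d-s) Λⁿ ∏_{s ≤ i < s+2t} (λᵢⁿ - 1)`, while every
`eᵢ` has modulus at most `κ⁻ⁿ`. So the difference is that main term times `∏ (1 + eᵢ) - 1`,
which is `O(κ⁻ⁿ)`; the unimodular factors are bounded by `2` and `Λⁿ` cancels.
-/

open Finset

theorem Real.exp_sub_one_le_mul_exp (y : ℝ) : Real.exp y - 1 ≤ y * Real.exp y := by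
  have h := Real.add_one_le_exp (-y)
  rw [Real.exp_neg] at h
  have hy := Real.exp_pos y
  have : (-y + 1) * Real.exp y ≤ 1 := by
    calc (-y + 1) * Real.exp y ≤ (Real.exp y)⁻¹ * Real.exp y := by gcongr
      _ = 1 := inv_mul_cancel₀ hy.ne'
  linarith

theorem Finset.norm_prod_one_add_sub_one_le_of_norm_le {ι R : Type*} [NormedCommRing R]
    [NormOneClass R] (t : Finset ι) (f : ι → R) {ε : ℝ} (hε : ε ≤ 1)
    (hf : ∀ i ∈ t, ‖f i‖ ≤ ε) :
    ‖∏ i ∈ t, (1 + f i) - 1‖ ≤ #t * Real.exp #t * ε := by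
  set y := ∑ i ∈ t, ‖f i‖
  have hy₀ : 0 ≤ y := sum_nonneg fun i _ => norm_nonneg _
  have hyε : y ≤ #t * ε := by simpa using sum_le_card_nsmul t _ ε hf
  have hyt : y ≤ #t := hyε.trans (by simpa using mul_le_mul_of_nonneg_left hε (#t).cast_nonneg)
  calc ‖∏ i ∈ t, (1 + f i) - 1‖ ≤ Real.exp y - 1 := t.norm_prod_one_add_sub_one_le f
    _ ≤ y * Real.exp y := Real.exp_sub_one_le_mul_exp y
    _ ≤ #t * ε * Real.exp #t := by gcongr; linarith
    _ = #t * Real.exp #t * ε := by ring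

theorem norm_pow_sub_one_le_two {K : Type*} [NormedDivisionRing K] {z : K} (hz : ‖z‖ ≤ 1)
    (n : ℕ) : ‖z ^ n - 1‖ ≤ 2 :=
  calc ‖z ^ n - 1‖ ≤ ‖z‖ ^ n + ‖(1 : K)‖ := by rw [← norm_pow]; exact norm_sub_le _ _
    _ ≤ 1 + 1 := by gcongr; exacts [pow_le_one₀ (norm_nonneg z) hz, norm_one.le]
    _ = 2 := one_add_one_eq_two

theorem norm_prod_pow_sub_one_le {ι K : Type*} [NormedField K] (t : Finset ι) (z : ι → K)
    (hz : ∀ i ∈ t, ‖z i‖ ≤ 1) (n : ℕ) : ‖∏ i ∈ t, (z i ^ n - 1)‖ ≤ 2 ^ #t := by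
  rw [norm_prod]
  calc ∏ i ∈ t, ‖z i ^ n - 1‖ ≤ ∏ _i ∈ t, (2 : ℝ) :=
        prod_le_prod (fun _ _ => norm_nonneg _) fun i hi => norm_pow_sub_one_le_two (hz i hi) n
    _ = 2 ^ #t := prod_const 2

theorem Finset.prod_range_eq_mul_prod_Ico_mul_prod_Ico {M : Type*} [CommMonoid M] (f : ℕ → M)
    {s m d : ℕ} (hsm : s ≤ m) (hmd : m ≤ d) :
    ∏ i ∈ range d, f i = (∏ i ∈ range s, f i) * (∏ i ∈ Ico s m, f i) * ∏ i ∈ Ico m d, f i := by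
  rw [prod_range_mul_prod_Ico f hsm, prod_range_mul_prod_Ico f hmd]

-- `λᵢⁿ - 1 = uᵢ * (1 + relativeError lam s m n i)` with `uᵢ = λᵢⁿ`, `λᵢⁿ - 1`, `-1` for
-- `i < s`, `s ≤ i < m`, `m ≤ i` respectively.
def relativeError {K : Type*} [Field K] (lam : ℕ → K) (s m n i : ℕ) : K :=
  if i < s then -(lam i ^ n)⁻¹ else if i < m then 0 else -lam i ^ n

theorem prod_pow_sub_one_eq {K : Type*} [Field K] {s m d : ℕ} (hsm : s ≤ m) (hmd : m ≤ d)
    (lam : ℕ → K) (hlam : ∀ i < s, lam i ≠ 0) (n : ℕ) :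
    ∏ i ∈ range d, (lam i ^ n - 1) = (-1) ^ (d - m) * (∏ i ∈ range s, lam i) ^ n *
      (∏ i ∈ Ico s m, (lam i ^ n - 1)) * ∏ i ∈ range d, (1 + relativeError lam s m n i) := by
  have head : ∏ i ∈ range s, (lam i ^ n - 1) =
      (∏ i ∈ range s, lam i) ^ n * ∏ i ∈ range s, (1 + relativeError lam s m n i) := by
    rw [← prod_pow, ← prod_mul_distrib]
    refine prod_congr rfl fun i hi => ?_
    have his : i < s := mem_range.1 hi
    have := pow_ne_zero n (hlam i his)
    simp only [relativeError, if_pos his]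
    field_simp
    ring
  have middle : ∏ i ∈ Ico s m, (1 + relativeError lam s m n i) = 1 :=
    prod_eq_one fun i hi => by
      obtain ⟨hsi, him⟩ := mem_Ico.1 hi
      simp [relativeError, hsi.not_gt, him]
  have tail : ∏ i ∈ Ico m d, (lam i ^ n - 1) =
      (-1) ^ (d - m) * ∏ i ∈ Ico m d, (1 + relativeError lam s m n i) := by
    rw [← Nat.card_Ico m d, ← prod_const, ← prod_mul_distrib]
    refine prod_congr rfl fun i hi => ?_
    have hmi := (mem_Ico.1 hi).1
    simp only [relativeError, if_neg (hsm.trans hmi).not_gt, if_neg hmi.not_gt]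
    ring
  rw [prod_range_eq_mul_prod_Ico_mul_prod_Ico _ hsm hmd,
    prod_range_eq_mul_prod_Ico_mul_prod_Ico _ hsm hmd, head, middle, tail]
  ring

theorem norm_relativeError_le {K : Type*} [NormedField K] {s m d : ℕ} {lam : ℕ → K} {κ : ℝ}
    (hκ : 0 < κ) (hκ1 : ∀ i, i < s → κ ≤ ‖lam i‖)
    (hκ2 : ∀ i, m ≤ i → i < d → ‖lam i‖ ≤ κ⁻¹) (n : ℕ) {i : ℕ} (hi : i < d) :
    ‖relativeError lam s m n i‖ ≤ (κ ^ n)⁻¹ := by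
  unfold relativeError
  split_ifs with his him
  · rw [norm_neg, norm_inv, norm_pow]
    gcongr
    exact hκ1 i his
  · simpa using pow_nonneg hκ.le n
  · rw [norm_neg, norm_pow, ← inv_pow]
    gcongr
    exact hκ2 i (not_lt.1 him) hi

theorem stmt_7_general (d s t : ℕ) (hst : s + 2 * t ≤ d) (lam : ℕ → ℂ)
    (h2 : ∀ i, s ≤ i → i < s + 2 * t → ‖lam i‖ = 1)
    (κ : ℝ) (hκ : 1 < κ)
    (hκ1 : ∀ i, i < s → κ ≤ ‖lam i‖)
    (hκ2 : ∀ i, s + 2 * t ≤ i → i < d → ‖lam i‖ ≤ κ⁻¹) :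
    ∃ C : ℝ, ∀ n : ℕ, 1 ≤ n →
      ‖(∏ i ∈ Finset.range d, (lam i ^ n - 1)) -
          (-1 : ℂ) ^ (d - s) * (∏ i ∈ Finset.range s, lam i) ^ n *
            ∏ i ∈ Finset.Ico s (s + 2 * t), (lam i ^ n - 1)‖ /
        ‖∏ i ∈ Finset.range s, lam i‖ ^ n
      ≤ C * κ ^ (-(n : ℝ)) := by
  refine ⟨2 ^ (2 * t) * (d * Real.exp d), fun n _ => ?_⟩
  have hκ0 : 0 < κ := one_pos.trans hκ
  have hlam : ∀ i < s, lam i ≠ 0 := fun i hi => norm_pos_iff.1 (hκ0.trans_le (hκ1 i hi))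
  have hΛ : ‖∏ i ∈ range s, lam i‖ ^ n ≠ 0 :=
    pow_ne_zero n (norm_ne_zero_iff.2 (prod_ne_zero_iff.2 fun i hi => hlam i (mem_range.1 hi)))
  have hmiddle : ‖∏ i ∈ Ico s (s + 2 * t), (lam i ^ n - 1)‖ ≤ 2 ^ (2 * t) := by
    simpa using norm_prod_pow_sub_one_le _ lam
      (fun i hi => (h2 i (mem_Ico.1 hi).1 (mem_Ico.1 hi).2).le) n
  have herror : ‖∏ i ∈ range d, (1 + relativeError lam s (s + 2 * t) n i) - 1‖ ≤
      d * Real.exp d * (κ ^ n)⁻¹ := by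
    simpa using norm_prod_one_add_sub_one_le_of_norm_le (range d) _
      (inv_le_one_of_one_le₀ (one_le_pow₀ hκ.le))
      fun i hi => norm_relativeError_le hκ0 hκ1 hκ2 n (mem_range.1 hi)
  have hsign : (-1 : ℂ) ^ (d - s) = (-1) ^ (d - (s + 2 * t)) := by
    rw [show d - s = d - (s + 2 * t) + 2 * t by omega, pow_add, pow_mul, neg_one_sq, one_pow,
      mul_one]
  rw [prod_pow_sub_one_eq (by omega) hst lam hlam n, hsign, ← mul_sub_one, norm_mul, norm_mul,
    norm_mul, norm_pow, norm_pow, norm_neg, norm_one, one_pow, one_mul, mul_assoc,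
    mul_div_cancel_left₀ _ hΛ, Real.rpow_neg hκ0.le, Real.rpow_natCast]
  calc _ ≤ 2 ^ (2 * t) * (d * Real.exp d * (κ ^ n)⁻¹) := by gcongr
    _ = _ := by ring

theorem stmt_7 (d s t : ℕ) (hst : s + 2 * t ≤ d) (lam : ℕ → ℂ)
    (h1 : ∀ i, i < s → 1 < ‖lam i‖)
    (h2 : ∀ i, s ≤ i → i < s + 2 * t → ‖lam i‖ = 1)
    (h3 : ∀ i, s + 2 * t ≤ i → i < d → ‖lam i‖ < 1)
    (κ : ℝ) (hκ : 1 < κ)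
    (hκ1 : ∀ i, i < s → κ ≤ ‖lam i‖)
    (hκ2 : ∀ i, s + 2 * t ≤ i → i < d → ‖lam i‖ ≤ κ⁻¹) :
    ∃ C : ℝ, ∀ n : ℕ, 1 ≤ n →
      ‖(∏ i ∈ Finset.range d, (lam i ^ n - 1)) -
          (-1 : ℂ) ^ (d - s) * (∏ i ∈ Finset.range s, lam i) ^ n *
            ∏ i ∈ Finset.Ico s (s + 2 * t), (lam i ^ n - 1)‖ /
        ‖∏ i ∈ Finset.range s, lam i‖ ^ n
      ≤ C * κ ^ (-(n : ℝ)) :=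
  stmt_7_general d s t hst lam h2 κ hκ hκ1 hκ2
end

section
/- Let λ₁,…,λ_d be complex numbers partitioned as in Lemma 1 (s of modulus > 1, 2t of modulus 1, the rest of modulus < 1, no root of unity among them) with Λ = ∏_{i=1}^s λᵢ and F(n) = ∏_{i=1}^d |λᵢⁿ - 1|. Then | F(n)·|Λ|^{-n} - ∏_{i=s+1}^{s+2t} |λᵢⁿ - 1| | = O(κ^{-n}) for κ = min(|λ_s|, |λ_{s+2t+1}|^{-1}) > 1. -/
/-!
After dividing by `|Λ|ⁿ`, each expanding factor becomes `|λᵢ⁻ⁿ - 1|`, so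
`F(n) |Λ|⁻ⁿ` is the bounded product over the unit-circle eigenvalues times a product of factors
`|wⁿ - 1|` with `|w| ≤ κ⁻¹`. Each of these is within `κ⁻ⁿ` of `1`, and a product of `m` numbers
within `ε ≤ 1` of `1` is within `(2ᵐ - 1) ε` of `1`.
-/

open Finset

lemma abs_mul_sub_one_le {a b ε : ℝ} {k m : ℕ} (hε : ε ≤ 1)
    (ha : |a - 1| ≤ (2 ^ k - 1) * ε) (hb : |b - 1| ≤ (2 ^ m - 1) * ε) :
    |a * b - 1| ≤ (2 ^ (k + m) - 1) * ε := by
  have hk : (1 : ℝ) ≤ 2 ^ k := one_le_pow₀ (by norm_num)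
  have ha_le : |a| ≤ 2 ^ k := by
    have := abs_sub_abs_le_abs_sub a 1
    rw [abs_one] at this
    nlinarith
  calc |a * b - 1| = |a * (b - 1) + (a - 1)| := by ring_nf
    _ ≤ |a| * |b - 1| + |a - 1| := by rw [← abs_mul]; exact abs_add_le _ _
    _ ≤ 2 ^ k * ((2 ^ m - 1) * ε) + (2 ^ k - 1) * ε := by gcongr
    _ = (2 ^ (k + m) - 1) * ε := by ring

lemma abs_prod_sub_one_le {ι : Type*} (S : Finset ι) (x : ι → ℝ) {ε : ℝ} (hε : ε ≤ 1)
    (hx : ∀ i ∈ S, |x i - 1| ≤ ε) :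
    |∏ i ∈ S, x i - 1| ≤ (2 ^ #S - 1) * ε := by
  induction S using Finset.cons_induction with
  | empty => simp
  | cons a S ha ih =>
    rw [prod_cons, card_cons, add_comm]
    refine abs_mul_sub_one_le (k := 1) hε ?_ (ih fun i hi => hx i (mem_cons_of_mem hi))
    norm_num
    exact hx a (mem_cons_self a S)

lemma abs_norm_sub_one_sub_one_le {R : Type*} [SeminormedRing R] [NormOneClass R] (x : R) :
    |‖x - 1‖ - 1| ≤ ‖x‖ := by
  simpa using abs_norm_sub_norm_le (x - 1) (-1)

lemma norm_pow_sub_one_div_norm_pow {K : Type*} [NormedDivisionRing K] {z : K} (hz : z ≠ 0)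
    (n : ℕ) : ‖z ^ n - 1‖ / ‖z‖ ^ n = ‖z⁻¹ ^ n - 1‖ := by
  have hzn : z ^ n ≠ 0 := pow_ne_zero n hz
  rw [div_eq_iff (by positivity), ← norm_pow, ← norm_mul, sub_mul, inv_pow,
    inv_mul_cancel₀ hzn, one_mul, norm_sub_rev]

lemma abs_prod_norm_pow_sub_one_sub_one_le {ι K : Type*} [NormedDivisionRing K] (S : Finset ι)
    (w : ι → K) {r : ℝ} (hr0 : 0 ≤ r) (hr1 : r ≤ 1) (hw : ∀ i ∈ S, ‖w i‖ ≤ r) (n : ℕ) :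
    |∏ i ∈ S, ‖w i ^ n - 1‖ - 1| ≤ (2 ^ #S - 1) * r ^ n := by
  refine abs_prod_sub_one_le S _ (pow_le_one₀ hr0 hr1) fun i hi => ?_
  calc |‖w i ^ n - 1‖ - 1| ≤ ‖w i ^ n‖ := abs_norm_sub_one_sub_one_le _
    _ = ‖w i‖ ^ n := norm_pow _ _
    _ ≤ r ^ n := pow_le_pow_left₀ (norm_nonneg _) (hw i hi) n

lemma prod_norm_pow_sub_one_le_two_pow {ι K : Type*} [NormedDivisionRing K] (S : Finset ι)
    (w : ι → K) (hw : ∀ i ∈ S, ‖w i‖ = 1) (n : ℕ) :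
    ∏ i ∈ S, ‖w i ^ n - 1‖ ≤ 2 ^ #S := by
  rw [← prod_const]
  refine prod_le_prod (fun _ _ => norm_nonneg _) fun i hi => ?_
  calc ‖w i ^ n - 1‖ ≤ ‖w i ^ n‖ + ‖(1 : K)‖ := norm_sub_le _ _
    _ = 2 := by rw [norm_pow, hw i hi, one_pow, norm_one]; norm_num

theorem stmt_8_general (d s t : ℕ) (hst : s + 2 * t ≤ d) (lam : ℕ → ℂ)
    (h2 : ∀ i, s ≤ i → i < s + 2 * t → ‖lam i‖ = 1)
    (κ : ℝ) (hκ : 1 < κ)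
    (hκ1 : ∀ i, i < s → κ ≤ ‖lam i‖)
    (hκ2 : ∀ i, s + 2 * t ≤ i → i < d → ‖lam i‖ ≤ κ⁻¹) :
    ∃ C : ℝ, ∀ n : ℕ, 1 ≤ n →
      |(∏ i ∈ Finset.range d, ‖lam i ^ n - 1‖) *
          (‖∏ i ∈ Finset.range s, lam i‖ ^ n)⁻¹ -
        ∏ i ∈ Finset.Ico s (s + 2 * t), ‖lam i ^ n - 1‖|
      ≤ C * κ ^ (-(n : ℝ)) := by
  have hκ0 : 0 < κ := by linarith
  have hr0 : 0 ≤ κ⁻¹ := inv_nonneg.mpr hκ0.le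
  have hr1 : κ⁻¹ ≤ 1 := inv_le_one_of_one_le₀ hκ.le
  have hlam0 : ∀ i < s, lam i ≠ 0 := fun i hi =>
    norm_pos_iff.mp (hκ0.trans_le (hκ1 i hi))
  refine ⟨2 ^ (2 * t) * (2 ^ (s + (d - (s + 2 * t))) - 1), fun n _ => ?_⟩
  set B := ∏ i ∈ Ico s (s + 2 * t), ‖lam i ^ n - 1‖
  set P := ∏ i ∈ range s, ‖(lam i)⁻¹ ^ n - 1‖
  set Q := ∏ i ∈ Ico (s + 2 * t) d, ‖lam i ^ n - 1‖
  have hP : |P - 1| ≤ (2 ^ s - 1) * κ⁻¹ ^ n := by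
    simpa only [card_range] using
      abs_prod_norm_pow_sub_one_sub_one_le (range s) (fun i => (lam i)⁻¹) hr0 hr1
        (fun i hi => by
          rw [norm_inv]; exact inv_anti₀ (by positivity) (hκ1 i (mem_range.mp hi))) n
  have hQ : |Q - 1| ≤ (2 ^ (d - (s + 2 * t)) - 1) * κ⁻¹ ^ n := by
    simpa only [Nat.card_Ico] using
      abs_prod_norm_pow_sub_one_sub_one_le (Ico (s + 2 * t) d) lam hr0 hr1
        (fun i hi => hκ2 i (mem_Ico.mp hi).1 (mem_Ico.mp hi).2) n
  have hB : B ≤ 2 ^ (2 * t) := by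
    simpa using prod_norm_pow_sub_one_le_two_pow (Ico s (s + 2 * t)) lam
      (fun i hi => h2 i (mem_Ico.mp hi).1 (mem_Ico.mp hi).2) n
  have hexpanding : (∏ i ∈ range s, ‖lam i ^ n - 1‖) * (‖∏ i ∈ range s, lam i‖ ^ n)⁻¹ = P := by
    rw [norm_prod, ← prod_pow, ← div_eq_mul_inv, ← prod_div_distrib]
    exact prod_congr rfl fun i hi => norm_pow_sub_one_div_norm_pow (hlam0 i (mem_range.mp hi)) n
  have hsplit : ∏ i ∈ range d, ‖lam i ^ n - 1‖ = (∏ i ∈ range s, ‖lam i ^ n - 1‖) * B * Q := by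
    rw [prod_range_mul_prod_Ico _ (by omega), prod_range_mul_prod_Ico _ hst]
  have hidentity : (∏ i ∈ range d, ‖lam i ^ n - 1‖) * (‖∏ i ∈ range s, lam i‖ ^ n)⁻¹ - B
      = B * (P * Q - 1) := by
    rw [hsplit, ← hexpanding]; ring
  rw [hidentity, abs_mul, abs_of_nonneg (prod_nonneg fun _ _ => norm_nonneg _),
    Real.rpow_neg hκ0.le, Real.rpow_natCast, ← inv_pow, mul_assoc]
  exact mul_le_mul hB (abs_mul_sub_one_le (pow_le_one₀ hr0 hr1) hP hQ) (abs_nonneg _)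
    (by positivity)

theorem stmt_8 (d s t : ℕ) (hst : s + 2 * t ≤ d) (lam : ℕ → ℂ)
    (h1 : ∀ i, i < s → 1 < ‖lam i‖)
    (h2 : ∀ i, s ≤ i → i < s + 2 * t → ‖lam i‖ = 1)
    (h3 : ∀ i, s + 2 * t ≤ i → i < d → ‖lam i‖ < 1)
    (hru : ∀ i, i < d → ∀ k : ℕ, 1 ≤ k → lam i ^ k ≠ 1)
    (κ : ℝ) (hκ : 1 < κ)
    (hκ1 : ∀ i, i < s → κ ≤ ‖lam i‖)
    (hκ2 : ∀ i, s + 2 * t ≤ i → i < d → ‖lam i‖ ≤ κ⁻¹) :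
    ∃ C : ℝ, ∀ n : ℕ, 1 ≤ n →
      |(∏ i ∈ Finset.range d, ‖lam i ^ n - 1‖) *
          (‖∏ i ∈ Finset.range s, lam i‖ ^ n)⁻¹ -
        ∏ i ∈ Finset.Ico s (s + 2 * t), ‖lam i ^ n - 1‖|
      ≤ C * κ ^ (-(n : ℝ)) :=
  stmt_8_general d s t hst lam h2 κ hκ hκ1 hκ2
end

section
/- Let θ₁, θ₂, θ₃ be real numbers with θ₂ = 2θ₁, θ₃ = 3θ₁ and θ₁ irrational. Then (1/N) ∑_{n=1}^N ∏_{j=1}^3 (2 - 2cos(2πnθⱼ)) → 6 as N → ∞. -/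
/-!
Expanding the product into a trigonometric polynomial in `a = 2πnθ₁` gives
`6 - 6 cos 2a - 4 cos 3a + 2 cos 4a + 4 cos 5a - 2 cos 6a`. For `k ≠ 0` the number `kθ₁` is
irrational, so `z = exp(2πikθ₁) ≠ 1` and the partial sums of `cos(2πnkθ₁) = Re zⁿ` are bounded
by the geometric-sum estimate `2 / ‖z - 1‖`; their averages therefore tend to `0`, leaving the
constant term `6`.
-/

open Filter Finset Real Topology

theorem norm_sum_Icc_pow_le {𝕜 : Type*} [NormedField 𝕜] {z : 𝕜} (hz : ‖z‖ ≤ 1) (hz1 : z ≠ 1)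
    (N : ℕ) : ‖∑ n ∈ Icc 1 N, z ^ n‖ ≤ 2 / ‖z - 1‖ := by
  have hgeom : ∑ n ∈ Icc 1 N, z ^ n = (z ^ N - 1) / (z - 1) * z := by
    rw [← Ico_add_one_right_eq_Icc, sum_Ico_eq_sum_range, Nat.add_sub_cancel]
    simp only [add_comm 1, pow_succ]
    rw [← sum_mul, geom_sum_eq hz1]
  have hpow : ‖z ^ N - 1‖ ≤ 2 := calc
    ‖z ^ N - 1‖ ≤ ‖z‖ ^ N + ‖(1 : 𝕜)‖ := by rw [← norm_pow]; exact norm_sub_le _ _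
    _ ≤ 1 + 1 := by gcongr; exacts [pow_le_one₀ (norm_nonneg z) hz, norm_one.le]
    _ = 2 := one_add_one_eq_two
  rw [hgeom, norm_mul, norm_div]
  calc ‖z ^ N - 1‖ / ‖z - 1‖ * ‖z‖ ≤ 2 / ‖z - 1‖ * 1 := by gcongr
    _ = 2 / ‖z - 1‖ := mul_one _

theorem tendsto_one_div_mul_sum_Icc_of_abs_le {f : ℕ → ℝ} {C : ℝ}
    (hf : ∀ N, |∑ n ∈ Icc 1 N, f n| ≤ C) :
    Tendsto (fun N : ℕ => (1 / N : ℝ) * ∑ n ∈ Icc 1 N, f n) atTop (𝓝 0) := by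
  refine squeeze_zero_norm (fun N => ?_) (tendsto_const_div_atTop_nhds_zero_nat C)
  rw [Real.norm_eq_abs, abs_mul, abs_of_nonneg (by positivity), one_div_mul_eq_div]
  gcongr
  exact hf N

theorem tendsto_avg_cos_nat_mul {β : ℝ} (hβ : ∀ m : ℤ, β ≠ 2 * π * m) :
    Tendsto (fun N : ℕ => (1 / N : ℝ) * ∑ n ∈ Icc 1 N, cos (n * β)) atTop (𝓝 0) := by
  set z := Complex.exp (β * Complex.I)
  have hz1 : z ≠ 1 := by
    rw [Ne, Complex.exp_eq_one_iff]
    rintro ⟨m, hm⟩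
    refine hβ m (Complex.ofReal_injective ?_)
    push_cast
    exact mul_right_cancel₀ Complex.I_ne_zero (by linear_combination hm)
  refine tendsto_one_div_mul_sum_Icc_of_abs_le (C := 2 / ‖z - 1‖) fun N => ?_
  have hre : ∑ n ∈ Icc 1 N, cos (n * β) = (∑ n ∈ Icc 1 N, z ^ n).re := by
    rw [Complex.re_sum]
    refine sum_congr rfl fun n _ => ?_
    rw [← Complex.exp_nat_mul, ← mul_assoc, ← Complex.ofReal_natCast, ← Complex.ofReal_mul,
      Complex.exp_ofReal_mul_I_re]
  rw [hre]
  exact (Complex.abs_re_le_norm _).trans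
    (norm_sum_Icc_pow_le (Complex.norm_exp_ofReal_mul_I β).le hz1 N)

theorem tendsto_avg_cos_sum_of_irrational {θ : ℝ} (hθ : Irrational θ) {K : ℕ}
    (c : Fin (K + 1) → ℝ) :
    Tendsto (fun N : ℕ => (1 / N : ℝ) * ∑ n ∈ Icc 1 N,
      ∑ k, c k * cos (k * (2 * π * n * θ))) atTop (𝓝 (c 0)) := by
  have hcos (k : ℕ) (hk : k ≠ 0) : Tendsto (fun N : ℕ => (1 / N : ℝ) * ∑ n ∈ Icc 1 N,
      cos (k * (2 * π * n * θ))) atTop (𝓝 0) := by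
    have hβ : ∀ m : ℤ, 2 * π * (k * θ) ≠ 2 * π * m := fun m h =>
      (hθ.natCast_mul hk).ne_int m (mul_left_cancel₀ two_pi_pos.ne' h)
    convert tendsto_avg_cos_nat_mul hβ using 5
    ring
  have hone : Tendsto (fun N : ℕ => (1 / N : ℝ) * ∑ n ∈ Icc 1 N, cos (0 * (2 * π * n * θ)))
      atTop (𝓝 1) := by
    refine tendsto_const_nhds.congr' ?_
    filter_upwards [eventually_ne_atTop 0] with N hN
    simp [hN]
  have hswap (N : ℕ) : (1 / N : ℝ) * ∑ n ∈ Icc 1 N, ∑ k, c k * cos (k * (2 * π * n * θ)) =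
      ∑ k, c k * ((1 / N : ℝ) * ∑ n ∈ Icc 1 N, cos (k * (2 * π * n * θ))) := by
    simp only [mul_sum]
    rw [sum_comm]
    simp only [mul_left_comm]
  simp_rw [hswap, Fin.sum_univ_succ]
  simpa using (hone.const_mul (c 0)).add (tendsto_finsetSum univ fun (i : Fin K) _ =>
    (hcos i.succ (Fin.val_ne_zero_iff.mpr (Fin.succ_ne_zero i))).const_mul (c i.succ))

theorem prod_two_sub_two_cos_eq_sum (a : ℝ) :
    (2 - 2 * cos a) * (2 - 2 * cos (2 * a)) * (2 - 2 * cos (3 * a)) =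
      ∑ k : Fin 7, ![6, 0, -6, -4, 2, 4, -2] k * cos (k * a) := by
  have e2 : 2 * a = a + a := by ring
  have e3 : 3 * a = a + (a + a) := by ring
  have e4 : 4 * a = a + (a + (a + a)) := by ring
  have e5 : 5 * a = a + (a + (a + (a + a))) := by ring
  have e6 : 6 * a = a + (a + (a + (a + (a + a)))) := by ring
  norm_num [Fin.sum_univ_succ]
  rw [e2, e3, e4, e5, e6]
  simp only [cos_add, sin_add]
  linear_combination (-2 * sin a ^ 4 + 8 * cos a ^ 2 * sin a ^ 2 + 4 * cos a * sin a ^ 2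
    - 4 * sin a ^ 2 - 6 * cos a ^ 4 + 4 * cos a ^ 3 + 8 * cos a - 2) * sin_sq_add_cos_sq a

theorem stmt_13 (θ₁ θ₂ θ₃ : ℝ) (h2 : θ₂ = 2 * θ₁) (h3 : θ₃ = 3 * θ₁)
    (hθ : Irrational θ₁) :
    Tendsto (fun N : ℕ =>
        (1 / N : ℝ) * ∑ n ∈ Finset.Icc 1 N,
          (2 - 2 * Real.cos (2 * Real.pi * n * θ₁)) *
            (2 - 2 * Real.cos (2 * Real.pi * n * θ₂)) *
              (2 - 2 * Real.cos (2 * Real.pi * n * θ₃)))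
      atTop (nhds 6) := by
  have hsummand (n : ℕ) :
      (2 - 2 * cos (2 * π * n * θ₁)) * (2 - 2 * cos (2 * π * n * θ₂)) *
        (2 - 2 * cos (2 * π * n * θ₃)) =
      ∑ k : Fin 7, ![6, 0, -6, -4, 2, 4, -2] k * cos (k * (2 * π * n * θ₁)) := by
    rw [← prod_two_sub_two_cos_eq_sum, h2, h3]
    ring_nf
  simp only [hsummand]
  exact tendsto_avg_cos_sum_of_irrational hθ _
end

section
/- Let F : ℕ → ℝ satisfy 0 ≤ F(n) ≤ C·Λⁿ for all n ≥ 1, for some constants C > 0 and Λ > 1. Then the series ∑_{n=1}^∞ (1/(n Λⁿ)) ∑_{d | n, d < n} |μ(n/d)| F(d) converges, and its tail beyond N is O(Λ^{-N/2}). -/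
/-!
Every proper divisor `d` of `n` satisfies `d ≤ n / 2`, and there are at most `n` of them, so the
inner sum is at most `n · C · Λ^{n/2}`. Hence the `n`-th term is at most `C · r^n` with
`r = Λ^{-1/2} < 1`, and the series is dominated by a geometric series whose tail after `N` is
`O(r^N) = O(Λ^{-N/2})`.
-/

open ArithmeticFunction Finset
open scoped ArithmeticFunction.Moebius

namespace Nat

theorem two_mul_le_of_mem_properDivisors {d n : ℕ} (h : d ∈ n.properDivisors) : 2 * d ≤ n := by
  obtain ⟨⟨k, rfl⟩, hlt⟩ := mem_properDivisors.mp h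
  have hk : 2 ≤ k := by
    by_contra! hk
    interval_cases k <;> simp at hlt
  calc 2 * d = d * 2 := mul_comm 2 d
    _ ≤ d * k := Nat.mul_le_mul_left d hk

theorem card_properDivisors_le_self (n : ℕ) : #n.properDivisors ≤ n :=
  (card_le_card properDivisors_subset_divisors).trans (card_divisors_le_self n)

end Nat

theorem Real.inv_sqrt_pow_eq_rpow {x : ℝ} (hx : 0 ≤ x) (N : ℕ) :
    (√x)⁻¹ ^ N = x ^ (-(N : ℝ) / 2) := by
  rw [Real.sqrt_eq_rpow, ← Real.rpow_natCast, Real.inv_rpow (by positivity), ← Real.rpow_mul hx,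
    ← Real.rpow_neg hx]
  ring_nf

section ProperDivisorSum

variable {F : ℕ → ℝ} {C L : ℝ}

theorem sum_properDivisors_abs_moebius_mul_le (hC : 0 ≤ C) (hL : 1 ≤ L)
    (hF : ∀ d, 1 ≤ d → 0 ≤ F d ∧ F d ≤ C * L ^ d) (n : ℕ) :
    ∑ d ∈ n.properDivisors, |(μ (n / d) : ℝ)| * F d ≤ n * (C * √L ^ n) := by
  have hterm : ∀ d ∈ n.properDivisors, |(μ (n / d) : ℝ)| * F d ≤ C * √L ^ n := by
    intro d hd
    obtain ⟨hF0, hFd⟩ := hF d (Nat.pos_of_mem_properDivisors hd)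
    have hmu : |(μ (n / d) : ℝ)| ≤ 1 := by exact_mod_cast abs_moebius_le_one
    calc |(μ (n / d) : ℝ)| * F d ≤ F d := mul_le_of_le_one_left hF0 hmu
      _ ≤ C * L ^ d := hFd
      _ = C * √L ^ (2 * d) := by rw [pow_mul, Real.sq_sqrt (by linarith)]
      _ ≤ C * √L ^ n := by
        gcongr
        · exact Real.one_le_sqrt.mpr hL
        · exact Nat.two_mul_le_of_mem_properDivisors hd
  calc _ ≤ #n.properDivisors • (C * √L ^ n) := sum_le_card_nsmul _ _ _ hterm
    _ ≤ n * (C * √L ^ n) := by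
      rw [nsmul_eq_mul]
      gcongr
      exact_mod_cast Nat.card_properDivisors_le_self n

theorem norm_properDivisors_term_le (hC : 0 ≤ C) (hL : 1 ≤ L)
    (hF : ∀ d, 1 ≤ d → 0 ≤ F d ∧ F d ≤ C * L ^ d) (n : ℕ) :
    ‖1 / (n * L ^ n) * ∑ d ∈ n.properDivisors, |(μ (n / d) : ℝ)| * F d‖ ≤ C * (√L)⁻¹ ^ n := by
  have hsum_nonneg : 0 ≤ ∑ d ∈ n.properDivisors, |(μ (n / d) : ℝ)| * F d :=
    sum_nonneg fun d hd => mul_nonneg (abs_nonneg _) (hF d (Nat.pos_of_mem_properDivisors hd)).1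
  have hL0 : 0 < L := by linarith
  rw [Real.norm_of_nonneg (by positivity)]
  rcases n.eq_zero_or_pos with rfl | hn
  · simpa using hC
  have hLn : L ^ n = √L ^ n * √L ^ n := by rw [← mul_pow, Real.mul_self_sqrt hL0.le]
  rw [one_div_mul_eq_div, div_le_iff₀ (by positivity)]
  calc _ ≤ n * (C * √L ^ n) := sum_properDivisors_abs_moebius_mul_le hC hL hF n
    _ = C * (√L)⁻¹ ^ n * (n * L ^ n) := by
      rw [hLn, inv_pow]
      field_simp

end ProperDivisorSum

theorem stmt_15 (F : ℕ → ℝ) (C L : ℝ) (hC : 0 < C) (hL : 1 < L)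
    (hF : ∀ n : ℕ, 1 ≤ n → 0 ≤ F n ∧ F n ≤ C * L ^ n) :
    Summable (fun n : ℕ =>
      (1 / (n * L ^ n)) * ∑ d ∈ n.properDivisors, |(μ (n / d) : ℝ)| * F d) ∧
    ∃ C' : ℝ, ∀ N : ℕ, 1 ≤ N →
      |(∑' n : ℕ, (1 / (n * L ^ n)) * ∑ d ∈ n.properDivisors, |(μ (n / d) : ℝ)| * F d)
          - ∑ n ∈ Finset.range (N + 1),
              (1 / (n * L ^ n)) * ∑ d ∈ n.properDivisors, |(μ (n / d) : ℝ)| * F d|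
        ≤ C' * L ^ (-(N : ℝ) / 2) := by
  set r := (√L)⁻¹
  have hr0 : 0 ≤ r := by positivity
  have hr1 : r < 1 := inv_lt_one_of_one_lt₀ ((Real.lt_sqrt zero_le_one).mpr (by simpa using hL))
  have hbound := norm_properDivisors_term_le hC.le hL.le hF
  have hsum := Summable.of_norm_bounded ((summable_geometric_of_lt_one hr0 hr1).mul_left C) hbound
  refine ⟨hsum, C * r / (1 - r), fun N _ => ?_⟩
  rw [abs_sub_comm, ← Real.inv_sqrt_pow_eq_rpow (by linarith)]
  calc _ ≤ C * r ^ (N + 1) / (1 - r) :=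
        norm_sub_le_of_geometric_bound_of_hasSum hr1 hbound hsum.hasSum (N + 1)
    _ = C * r / (1 - r) * r ^ N := by ring
end

section
/- The matrix A = [[0,0,0,-1],[1,0,0,8],[0,1,0,-6],[0,0,1,8]] has characteristic polynomial x⁴ - 8x³ + 6x² - 8x + 1, determinant 1, and its characteristic polynomial has exactly two complex roots of modulus 1 (a conjugate pair, not roots of unity) and two real roots of modulus ≠ 1. -/
/-!
The polynomial is palindromic: it factors as `(x² - (4 - 2√3) x + 1) (x² - (4 + 2√3) x + 1)`.
Since `|4 - 2√3| < 2`, the first factor has a pair of conjugate roots `z, z̄` on the unit circle;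
since `4 + 2√3 > 2`, the second has two positive real roots `y, 1/y` with `y > 1`.

If `z^k = 1`, the Dickson polynomial `D_k ∈ ℤ[X]`, which satisfies `D_k(u + u⁻¹) = u^k + u⁻ᵏ`,
takes the value `2` at `z + z⁻¹ = 4 - 2√3`. As `D_k - 2` has integer coefficients, the
automorphism `√3 ↦ -√3` of `ℤ[√3]` shows that it also vanishes at `4 + 2√3 = y + y⁻¹`,
i.e. `y^k + y⁻ᵏ = 2`, which is impossible for `0 < y ≠ 1`.
-/

open Matrix Polynomial ComplexConjugate

theorem aeval_sub_mul_eq_zero_of_aeval_add_mul_eq_zero {R : Type*} [CommRing R] [CharZero R]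
    {d : ℤ} (hd : ∀ n : ℤ, d ≠ n * n) {r : R} (hr : r * r = d) {P : ℤ[X]} {a b : ℤ}
    (h : aeval (a + b * r) P = 0) : aeval (a - b * r) P = 0 := by
  set f := Zsqrtd.lift ⟨r, hr⟩
  have hx : f ⟨a, b⟩ = a + b * r := by simp [f]
  have hx' : f (star ⟨a, b⟩) = a - b * r := by simp [f]; ring
  have comm : ∀ (g : ℤ√d →+* R) x, aeval (g x) P = g (aeval x P) :=
    fun g x => aeval_algHom_apply g.toIntAlgHom x P
  have hzero : aeval (⟨a, b⟩ : ℤ√d) P = 0 := by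
    rwa [← hx, comm, map_eq_zero_iff f (Zsqrtd.lift_injective _ hd)] at h
  rw [← hx', ← starRingEnd_apply, ← RingHom.comp_apply, comm, RingHom.comp_apply,
    hzero, map_zero, map_zero]

theorem aeval_dickson_add_inv {R : Type*} [CommRing R] {x y : R} (h : x * y = 1) (n : ℕ) :
    aeval (x + y) (dickson 1 (1 : ℤ) n) = x ^ n + y ^ n := by
  rw [aeval_def, ← eval_map, map_dickson, eq_intCast, Int.cast_one,
    dickson_one_one_eval_add_inv x y h]

theorem add_inv_ne_two {t : ℝ} (ht : 0 < t) (ht1 : t ≠ 1) : t + t⁻¹ ≠ 2 := by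
  intro h
  have : (t - 1) ^ 2 = 0 := by field_simp at h; linear_combination h
  exact ht1 (by nlinarith [sq_nonneg (t - 1)])

theorem pow_ne_one_of_add_inv_eq {d : ℤ} (hd : ∀ n : ℤ, d ≠ n * n) {r : ℂ} (hr : r * r = d)
    {a b : ℤ} {w : ℂ} (hw : w + w⁻¹ = a + b * r) {y : ℝ} (hy₀ : 0 < y) (hy₁ : y ≠ 1)
    (hy : ((y + y⁻¹ : ℝ) : ℂ) = a - b * r) {k : ℕ} (hk : k ≠ 0) : w ^ k ≠ 1 := by
  intro hwk
  have hw₀ : w ≠ 0 := by rintro rfl; simp [hk] at hwk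
  have hD : aeval ((a : ℂ) + b * r) (dickson 1 (1 : ℤ) k - 2) = 0 := by
    rw [← hw, map_sub, aeval_dickson_add_inv (mul_inv_cancel₀ hw₀), inv_pow, hwk, map_ofNat]
    norm_num
  have hD' := aeval_sub_mul_eq_zero_of_aeval_add_mul_eq_zero hd hr hD
  rw [← hy, map_sub, map_ofNat, Complex.ofReal_add, Complex.ofReal_inv,
    aeval_dickson_add_inv (mul_inv_cancel₀ (Complex.ofReal_ne_zero.2 hy₀.ne')), sub_eq_zero,
    inv_pow] at hD'
  exact add_inv_ne_two (pow_pos hy₀ k) ((pow_eq_one_iff_of_nonneg hy₀.le hk).not.2 hy₁)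
    (by exact_mod_cast hD')

noncomputable def salemQuartic (R : Type*) [CommRing R] : R[X] :=
  X ^ 4 - 8 * X ^ 3 + 6 * X ^ 2 - 8 * X + 1

theorem salemQuartic_map {R S : Type*} [CommRing R] [CommRing S] (f : R →+* S) :
    (salemQuartic R).map f = salemQuartic S := by
  simp [salemQuartic]

theorem roots_salemQuartic {R : Type*} [CommRing R] [IsDomain R] {x₁ x₂ x₃ x₄ : R}
    (h₁₂ : x₁ * x₂ = 1) (h₃₄ : x₃ * x₄ = 1) (hsum : x₁ + x₂ + (x₃ + x₄) = 8)
    (hprod : (x₁ + x₂) * (x₃ + x₄) = 4) :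
    (salemQuartic R).roots = {x₁, x₂, x₃, x₄} := by
  have hfac : salemQuartic R = (({x₁, x₂, x₃, x₄} : Multiset R).map fun a => X - C a).prod := by
    apply_fun C at h₁₂ h₃₄ hsum hprod
    simp only [map_mul, map_add, map_one, map_ofNat] at h₁₂ h₃₄ hsum hprod
    simp only [salemQuartic, Multiset.insert_eq_cons, Multiset.map_cons, Multiset.prod_cons,
      Multiset.map_singleton, Multiset.prod_singleton]
    linear_combination (X ^ 3 + X) * hsum - X ^ 2 * hprod
      + (-X ^ 2 + (C x₃ + C x₄) * X - C x₃ * C x₄) * h₁₂ + (-X ^ 2 + (C x₁ + C x₂) * X - 1) * h₃₄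
  rw [hfac, roots_multiset_prod_X_sub_C]

def salemCompanion : Matrix (Fin 4) (Fin 4) ℤ := !![0,0,0,-1; 1,0,0,8; 0,1,0,-6; 0,0,1,8]

theorem charpoly_salemCompanion : salemCompanion.charpoly = salemQuartic ℤ := by
  simp [salemCompanion, salemQuartic, Matrix.charpoly, Matrix.det_succ_row_zero,
    Fin.sum_univ_succ, Fin.succAbove]
  ring

theorem det_salemCompanion : salemCompanion.det = 1 := by
  rw [det_eq_sign_charpoly_coeff, charpoly_salemCompanion]
  simp [salemQuartic]

theorem sqrt_three_sq : √3 ^ 2 = 3 := Real.sq_sqrt (by norm_num)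

theorem three_halves_lt_sqrt_three : 3 / 2 < √3 := by
  rw [Real.lt_sqrt (by norm_num)]; norm_num

noncomputable def unitRoot : ℂ := ⟨2 - √3, √(4 * √3 - 6)⟩

noncomputable def salemNumber : ℝ := 2 + √3 + √(6 + 4 * √3)

theorem unitRoot_re : unitRoot.re = 2 - √3 := rfl

theorem unitRoot_im : unitRoot.im = √(4 * √3 - 6) := rfl

theorem unitRoot_im_pos : 0 < unitRoot.im :=
  Real.sqrt_pos.2 (by linarith [three_halves_lt_sqrt_three])

theorem conj_unitRoot_ne : conj unitRoot ≠ unitRoot :=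
  mt Complex.conj_eq_iff_im.1 unitRoot_im_pos.ne'

theorem normSq_unitRoot : Complex.normSq unitRoot = 1 := by
  rw [Complex.normSq_apply, unitRoot_re, unitRoot_im,
    Real.mul_self_sqrt (by linarith [three_halves_lt_sqrt_three] : 0 ≤ 4 * √3 - 6)]
  nlinarith [sqrt_three_sq]

theorem norm_unitRoot : ‖unitRoot‖ = 1 := by
  rw [Complex.norm_def, normSq_unitRoot, Real.sqrt_one]

theorem unitRoot_add_conj : unitRoot + conj unitRoot = 4 - 2 * (√3 : ℂ) := by
  rw [Complex.add_conj, unitRoot_re]; push_cast; ring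

theorem salemNumber_inv : salemNumber⁻¹ = 2 + √3 - √(6 + 4 * √3) := by
  refine inv_eq_of_mul_eq_one_right ?_
  have h : √(6 + 4 * √3) ^ 2 = 6 + 4 * √3 := Real.sq_sqrt (by positivity)
  rw [salemNumber]
  linear_combination sqrt_three_sq - h

theorem salemNumber_add_inv : salemNumber + salemNumber⁻¹ = 4 + 2 * √3 := by
  rw [salemNumber_inv, salemNumber]; ring

theorem one_lt_salemNumber : 1 < salemNumber := by
  rw [salemNumber]; linarith [Real.sqrt_nonneg 3, Real.sqrt_nonneg (6 + 4 * √3)]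

theorem salemNumber_pos : 0 < salemNumber := zero_lt_one.trans one_lt_salemNumber

theorem norm_salemNumber_ne_one : ‖(salemNumber : ℂ)‖ ≠ 1 := by
  rw [Complex.norm_real, Real.norm_of_nonneg salemNumber_pos.le]
  exact one_lt_salemNumber.ne'

theorem norm_salemNumber_inv_ne_one : ‖((salemNumber⁻¹ : ℝ) : ℂ)‖ ≠ 1 := by
  rw [Complex.norm_real, Real.norm_of_nonneg (inv_pos.2 salemNumber_pos).le]
  exact (inv_lt_one_of_one_lt₀ one_lt_salemNumber).ne

theorem roots_map_charpoly_salemCompanion :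
    (salemCompanion.charpoly.map (algebraMap ℤ ℂ)).roots =
      {unitRoot, conj unitRoot, (salemNumber : ℂ), ((salemNumber⁻¹ : ℝ) : ℂ)} := by
  have hsqrt : ((√3 : ℝ) : ℂ) ^ 2 = 3 := by exact_mod_cast sqrt_three_sq
  have hsalem : (salemNumber : ℂ) + ((salemNumber⁻¹ : ℝ) : ℂ) = 4 + 2 * (√3 : ℂ) := by
    rw [← Complex.ofReal_add, salemNumber_add_inv]; push_cast; ring
  rw [charpoly_salemCompanion, salemQuartic_map]
  refine roots_salemQuartic ?_ ?_ ?_ ?_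
  · rw [Complex.mul_conj, normSq_unitRoot, Complex.ofReal_one]
  · rw [← Complex.ofReal_mul, mul_inv_cancel₀ salemNumber_pos.ne', Complex.ofReal_one]
  · rw [unitRoot_add_conj, hsalem]; ring
  · rw [unitRoot_add_conj, hsalem]; linear_combination -4 * hsqrt

theorem pow_ne_one_of_norm_eq_one_of_re_eq {w : ℂ} (hw : ‖w‖ = 1) (hre : w.re = 2 - √3)
    {k : ℕ} (hk : k ≠ 0) : w ^ k ≠ 1 := by
  refine pow_ne_one_of_add_inv_eq (d := 3) (r := √3) (a := 4) (b := -2) ?_ ?_ ?_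
    salemNumber_pos one_lt_salemNumber.ne' ?_ hk
  · intro n h
    rcases le_or_gt n 1 with h1 | h1 <;> rcases le_or_gt n (-2) with h2 | h2 <;> nlinarith
  · exact_mod_cast Real.mul_self_sqrt (by norm_num : (0 : ℝ) ≤ 3)
  · rw [Complex.inv_eq_conj hw, Complex.add_conj, hre]; push_cast; ring
  · rw [salemNumber_add_inv]; push_cast; ring

open scoped Classical in
theorem stmt_16 :
    let A : Matrix (Fin 4) (Fin 4) ℤ :=
      !![0,0,0,-1; 1,0,0,8; 0,1,0,-6; 0,0,1,8]
    let R := (A.charpoly.map (algebraMap ℤ ℂ)).roots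
    A.charpoly = X ^ 4 - 8 * X ^ 3 + 6 * X ^ 2 - 8 * X + 1 ∧
    A.det = 1 ∧
    Multiset.card (R.filter (fun z => ‖z‖ = 1)) = 2 ∧
    (∀ z ∈ R, ‖z‖ = 1 →
      (starRingEnd ℂ) z ∈ R ∧ (starRingEnd ℂ) z ≠ z ∧
        ∀ k : ℕ, 1 ≤ k → z ^ k ≠ 1) ∧
    Multiset.card (R.filter (fun z => ‖z‖ ≠ 1)) = 2 ∧
    (∀ z ∈ R, ‖z‖ ≠ 1 → z.im = 0) := by
  intro A R
  have hR : R = {unitRoot, conj unitRoot, (salemNumber : ℂ), ((salemNumber⁻¹ : ℝ) : ℂ)} :=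
    roots_map_charpoly_salemCompanion
  have hmem : ∀ z ∈ R, z = unitRoot ∨ z = conj unitRoot ∨ z = salemNumber ∨
      z = ((salemNumber⁻¹ : ℝ) : ℂ) := by
    simp [hR, -Complex.ofReal_inv]
  refine ⟨charpoly_salemCompanion, det_salemCompanion, ?_, ?_, ?_, ?_⟩
  · simp [hR, norm_unitRoot, norm_salemNumber_ne_one, -Complex.norm_real]
  · intro z hz hz1
    rcases hmem z hz with rfl | rfl | rfl | rfl
    · refine ⟨by simp [hR], conj_unitRoot_ne, fun k hk => ?_⟩
      exact pow_ne_one_of_norm_eq_one_of_re_eq hz1 unitRoot_re (by omega)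
    · refine ⟨by simp [hR], by simpa using conj_unitRoot_ne.symm, fun k hk => ?_⟩
      exact pow_ne_one_of_norm_eq_one_of_re_eq hz1 (by rw [Complex.conj_re, unitRoot_re]) (by omega)
    · exact absurd hz1 norm_salemNumber_ne_one
    · exact absurd hz1 norm_salemNumber_inv_ne_one
  · simp [hR, Multiset.filter_singleton, norm_unitRoot, norm_salemNumber_ne_one,
      norm_salemNumber_inv_ne_one, -Complex.norm_real, -Complex.ofReal_inv]
  · intro z hz hz1
    rcases hmem z hz with rfl | rfl | rfl | rfl
    · exact absurd norm_unitRoot hz1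
    · exact absurd (by rw [Complex.norm_conj, norm_unitRoot]) hz1
    · exact Complex.ofReal_im _
    · exact Complex.ofReal_im _
end
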